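/- arXiv:math/0008192 — 5 statements merged into one kernel-verified Lean document; each statement's English description precedes it below -/
import Mathlib

section
/- Let θ, γ, c be as in the context. Then γ is additive: γ(λ + λ') = γ(λ) + γ(λ') for all λ, λ' ∈ Λ. -/
open Complex

/-!
Computing `θ (z + l + l')` in one step and in two steps shows that on `U`, where `θ` may be
cancelled, `c (l + l') e^{γ (l + l') z}` and `c l c l' e^{(γ l + γ l') z}` agree up to constant
factors. Differentiating at a point of `U` shows that two such exponentials that agree on a
nonempty open set have the same rate.
-/

theorem eq_of_mul_exp_eq_mul_exp_on {U : Set ℂ} (hU : IsOpen U) (hUne : U.Nonempty)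
    {a b p q : ℂ} (ha : a ≠ 0) (h : ∀ z ∈ U, a * exp (p * z) = b * exp (q * z)) : p = q := by
  obtain ⟨z₀, hz₀⟩ := hUne
  have hderiv (k r : ℂ) : HasDerivAt (fun z => k * exp (r * z)) (k * exp (r * z₀) * r) z₀ := by
    simpa [mul_assoc] using
      ((hasDerivAt_exp (r * z₀)).comp z₀ ((hasDerivAt_id z₀).const_mul r)).const_mul k
  have hev : (fun z => a * exp (p * z)) =ᶠ[nhds z₀] fun z => b * exp (q * z) :=
    Filter.eventually_of_mem (hU.mem_nhds hz₀) h
  have hslope : a * exp (p * z₀) * p = b * exp (q * z₀) * q :=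
    (hderiv a p).unique ((hderiv b q).congr_of_eventuallyEq hev)
  rw [h z₀ hz₀] at hslope
  refine mul_left_cancel₀ ?_ hslope
  rw [← h z₀ hz₀]
  exact mul_ne_zero ha (exp_ne_zero _)

theorem multiplier_ne_zero {Λ : AddSubgroup ℂ} {θ γ c : ℂ → ℂ} {z₀ : ℂ} (hθ : θ z₀ ≠ 0)
    (hfe : ∀ z : ℂ, ∀ l ∈ Λ, θ (z + l) = c l * exp (γ l * (z + l / 2)) * θ z)
    {l : ℂ} (hl : l ∈ Λ) : c l ≠ 0 := by
  intro hc
  apply hθ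
  simpa [hc] using hfe (z₀ - l) l hl

theorem multiplier_cocycle {Λ : AddSubgroup ℂ} {θ γ c : ℂ → ℂ}
    (hfe : ∀ z : ℂ, ∀ l ∈ Λ, θ (z + l) = c l * exp (γ l * (z + l / 2)) * θ z)
    {l l' z : ℂ} (hl : l ∈ Λ) (hl' : l' ∈ Λ) (hθ : θ z ≠ 0) :
    c (l + l') * exp (γ (l + l') * (z + (l + l') / 2)) =
      c l' * exp (γ l' * (z + l + l' / 2)) * (c l * exp (γ l * (z + l / 2))) := by
  refine mul_right_cancel₀ hθ ?_
  rw [← hfe z _ (add_mem hl hl'), ← add_assoc, hfe _ _ hl', hfe _ _ hl]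
  ring

theorem gamma_additive_general
    (Λ : AddSubgroup ℂ)
    (θ γ c : ℂ → ℂ)
    (U : Set ℂ) (hUopen : IsOpen U) (hUne : U.Nonempty)
    (hθU : ∀ z ∈ U, θ z ≠ 0)
    (hfe : ∀ z : ℂ, ∀ l ∈ Λ, θ (z + l) = c l * Complex.exp (γ l * (z + l / 2)) * θ z) :
    ∀ l ∈ Λ, ∀ l' ∈ Λ, γ (l + l') = γ l + γ l' := by
  intro l hl l' hl'
  obtain ⟨z₀, hz₀⟩ := hUne
  have hc : c (l + l') ≠ 0 := multiplier_ne_zero (hθU z₀ hz₀) hfe (add_mem hl hl')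
  refine eq_of_mul_exp_eq_mul_exp_on hUopen ⟨z₀, hz₀⟩
    (a := c (l + l') * exp (γ (l + l') * ((l + l') / 2)))
    (b := c l' * c l * exp (γ l' * (l + l' / 2) + γ l * (l / 2)))
    (mul_ne_zero hc (exp_ne_zero _)) fun z hz => ?_
  have hcocycle := multiplier_cocycle hfe hl hl' (hθU z hz)
  simp only [mul_add, add_mul, exp_add] at hcocycle ⊢
  linear_combination hcocycle

theorem gamma_additive
    (ω₁ ω₂ : ℂ) (hindep : LinearIndependent ℝ ![ω₁, ω₂])
    (Λ : AddSubgroup ℂ) (hΛ : ∀ z : ℂ, z ∈ Λ ↔ ∃ a b : ℤ, z = a * ω₁ + b * ω₂)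
    (θ γ c : ℂ → ℂ)
    (U : Set ℂ) (hUopen : IsOpen U) (hUne : U.Nonempty)
    (hθU : ∀ z ∈ U, θ z ≠ 0)
    (hc : ∀ l ∈ Λ, c l = 1 ∨ c l = -1)
    (hfe : ∀ z : ℂ, ∀ l ∈ Λ, θ (z + l) = c l * Complex.exp (γ l * (z + l / 2)) * θ z) :
    ∀ l ∈ Λ, ∀ l' ∈ Λ, γ (l + l') = γ l + γ l' :=
  gamma_additive_general Λ θ γ c U hUopen hUne hθU hfe
end

section
/- Let θ, γ, c be as in the context. Then for all λ, λ' ∈ Λ one has c(λ + λ') = c(λ)·c(λ')·exp((γ(λ)·λ' − λ·γ(λ'))/2). -/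
open Complex

theorem c_cocycle
    (ω₁ ω₂ : ℂ) (hindep : LinearIndependent ℝ ![ω₁, ω₂])
    (Λ : AddSubgroup ℂ) (hΛ : ∀ z : ℂ, z ∈ Λ ↔ ∃ a b : ℤ, z = a * ω₁ + b * ω₂)
    (θ γ c : ℂ → ℂ)
    (U : Set ℂ) (hUopen : IsOpen U) (hUne : U.Nonempty)
    (hθU : ∀ z ∈ U, θ z ≠ 0)
    (hc : ∀ l ∈ Λ, c l = 1 ∨ c l = -1)
    (hfe : ∀ z : ℂ, ∀ l ∈ Λ, θ (z + l) = c l * Complex.exp (γ l * (z + l / 2)) * θ z) :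
    ∀ l ∈ Λ, ∀ l' ∈ Λ, c (l + l') = c l * c l' * Complex.exp ((γ l * l' - l * γ l') / 2) := by
  intro l hl l' hl'
  have hll' : l + l' ∈ Λ := Λ.add_mem hl hl'
  obtain ⟨z₀, hz₀⟩ := hUne
  have hcll' : c (l + l') ≠ 0 := by rcases hc _ hll' with h | h <;> simp [h]
  -- cancel θ z on U
  have key' : ∀ z ∈ U, c (l + l') * Complex.exp (γ (l + l') * (z + (l + l') / 2))
      = c l * c l' * Complex.exp (γ l * (z + l' + l / 2) + γ l' * (z + l' / 2)) := by
    intro z hz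
    have h1 := hfe z (l + l') hll'
    have h2 := hfe (z + l') l hl
    have h3 := hfe z l' hl'
    rw [h3] at h2
    rw [show z + (l + l') = z + l' + l from by ring, h2] at h1
    have h4 : (c l * c l' * Complex.exp (γ l * (z + l' + l / 2) + γ l' * (z + l' / 2))) * θ z
        = (c (l + l') * Complex.exp (γ (l + l') * (z + (l + l') / 2))) * θ z := by
      rw [Complex.exp_add]; linear_combination h1
    exact (mul_right_cancel₀ (hθU z hz) h4).symm
  set a : ℂ := γ (l + l') - γ l - γ l' with ha
  set E1 : ℂ := γ (l + l') * ((l + l') / 2) with hE1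
  set E2 : ℂ := γ l * (l' + l / 2) + γ l' * (l' / 2) with hE2
  -- product form with z isolated
  have hprod : ∀ z ∈ U, c (l + l') * Complex.exp (a * z) * Complex.exp E1
      = c l * c l' * Complex.exp E2 := by
    intro z hz
    have h := key' z hz
    have e1 : γ (l + l') * (z + (l + l') / 2) = (a * z + E1) + (γ l + γ l') * z := by
      rw [ha, hE1]; ring
    have e2 : γ l * (z + l' + l / 2) + γ l' * (z + l' / 2) = E2 + (γ l + γ l') * z := by
      rw [hE2]; ring
    rw [e1, e2, Complex.exp_add, Complex.exp_add, Complex.exp_add] at h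
    have h2 : (c (l + l') * Complex.exp (a * z) * Complex.exp E1) * Complex.exp ((γ l + γ l') * z)
        = (c l * c l' * Complex.exp E2) * Complex.exp ((γ l + γ l') * z) := by
      linear_combination h
    exact mul_right_cancel₀ (Complex.exp_ne_zero _) h2
  -- exp (a * z) is locally constant near z₀, hence a = 0
  have hev : (fun z => Complex.exp (a * z)) =ᶠ[nhds z₀] fun _ => Complex.exp (a * z₀) := by
    filter_upwards [hUopen.mem_nhds hz₀] with z hz
    have h1 := hprod z hz
    have h2 := hprod z₀ hz₀
    have h3 : c (l + l') * Complex.exp (a * z) * Complex.exp E1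
        = c (l + l') * Complex.exp (a * z₀) * Complex.exp E1 := h1.trans h2.symm
    have h4 := mul_right_cancel₀ (Complex.exp_ne_zero E1) h3
    exact mul_left_cancel₀ hcll' h4
  have hd : HasDerivAt (fun z => Complex.exp (a * z)) (Complex.exp (a * z₀) * a) z₀ := by
    simpa using ((hasDerivAt_id z₀).const_mul a).cexp
  have hderiv0 : Complex.exp (a * z₀) * a = 0 := by
    rw [← hd.deriv, hev.deriv_eq]
    simp
  have ha0 : a = 0 := by
    rcases mul_eq_zero.mp hderiv0 with h | h
    · exact absurd h (Complex.exp_ne_zero _)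
    · exact h
  have hγ : γ (l + l') = γ l + γ l' := by
    have h := ha0
    rw [ha] at h
    linear_combination h
  have hp := hprod z₀ hz₀
  rw [ha0, zero_mul, Complex.exp_zero, mul_one] at hp
  have hE : Complex.exp ((γ l * l' - l * γ l') / 2) * Complex.exp E1 = Complex.exp E2 := by
    rw [← Complex.exp_add, hE1, hE2, hγ]
    congr 1
    ring
  have hfin : c (l + l') * Complex.exp E1
      = (c l * c l' * Complex.exp ((γ l * l' - l * γ l') / 2)) * Complex.exp E1 := by
    linear_combination hp - (c l * c l') * hE
  exact mul_right_cancel₀ (Complex.exp_ne_zero E1) hfin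
end

section
/- For every z ∈ ℂ, the family n ↦ (1 − qⁿ·exp(z))·(1 − qⁿ·exp(−z))/(1 − qⁿ)² indexed by integers n ≥ 1 is multipliable, and the function σ is complex-differentiable (holomorphic) at every point of ℂ. -/
/-- The nome `q = exp(2πiτ)`. -/
noncomputable def nome (τ : ℂ) : ℂ := Complex.exp (2 * Real.pi * Complex.I * τ)

/-- The Weierstrass-type sigma function
`σ(z) = (e^{z/2} - e^{-z/2}) ∏_{n ≥ 1} (1 - qⁿ eᶻ)(1 - qⁿ e^{-z})/(1 - qⁿ)²`,
where the product over integers `n ≥ 1` is encoded as a product over `n : ℕ`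
with exponent `n + 1`. -/
noncomputable def wsigma (τ : ℂ) (z : ℂ) : ℂ :=
  (Complex.exp (z / 2) - Complex.exp (-z / 2)) *
    ∏' n : ℕ, ((1 - nome τ ^ (n + 1) * Complex.exp z) *
      (1 - nome τ ^ (n + 1) * Complex.exp (-z)) / (1 - nome τ ^ (n + 1)) ^ 2)

/-! Writing each factor as `1 + qⁿ⁺¹ (2 - eᶻ - e⁻ᶻ) / (1 - qⁿ⁺¹)²`, the correction term is
bounded on a compact set by a constant times `‖q‖ⁿ⁺¹`, because `‖1 - qⁿ⁺¹‖ ≥ 1 - ‖q‖`. Hence the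
product converges uniformly on compact sets, and its value is holomorphic as a locally uniform
limit of the holomorphic partial products. -/

open Complex

noncomputable def sigmaFactor (q z : ℂ) (n : ℕ) : ℂ :=
  (1 - q ^ (n + 1) * exp z) * (1 - q ^ (n + 1) * exp (-z)) / (1 - q ^ (n + 1)) ^ 2

lemma norm_nome_lt_one {τ : ℂ} (hτ : 0 < τ.im) : ‖nome τ‖ < 1 := by
  rw [nome, norm_exp, Real.exp_lt_one_iff]
  simpa [mul_re, mul_im] using mul_pos Real.two_pi_pos hτ

lemma one_sub_norm_le_norm_one_sub_pow {q : ℂ} (hq : ‖q‖ ≤ 1) (n : ℕ) :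
    1 - ‖q‖ ≤ ‖1 - q ^ (n + 1)‖ := by
  have : ‖q ^ (n + 1)‖ ≤ ‖q‖ := by
    rw [norm_pow]; exact pow_le_of_le_one (norm_nonneg q) hq n.succ_ne_zero
  calc 1 - ‖q‖ ≤ ‖(1 : ℂ)‖ - ‖q ^ (n + 1)‖ := by rw [norm_one]; linarith
    _ ≤ ‖1 - q ^ (n + 1)‖ := norm_sub_norm_le _ _

lemma one_sub_pow_ne_zero {q : ℂ} (hq : ‖q‖ < 1) (n : ℕ) : 1 - q ^ (n + 1) ≠ 0 :=
  norm_pos_iff.mp ((sub_pos.mpr hq).trans_le (one_sub_norm_le_norm_one_sub_pow hq.le n))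

lemma sigmaFactor_sub_one {q : ℂ} (hq : ‖q‖ < 1) (z : ℂ) (n : ℕ) :
    sigmaFactor q z n - 1 = q ^ (n + 1) * (2 - exp z - exp (-z)) / (1 - q ^ (n + 1)) ^ 2 := by
  rw [sigmaFactor, div_sub_one (pow_ne_zero 2 (one_sub_pow_ne_zero hq n))]
  have hexp : exp z * exp (-z) = 1 := by rw [← exp_add, add_neg_cancel, exp_zero]
  congr 1
  linear_combination (q ^ (n + 1)) ^ 2 * hexp

lemma norm_sigmaFactor_sub_one_le {q z : ℂ} {M : ℝ} (hq : ‖q‖ < 1)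
    (hM : ‖2 - exp z - exp (-z)‖ ≤ M) (n : ℕ) :
    ‖sigmaFactor q z n - 1‖ ≤ M / (1 - ‖q‖) ^ 2 * ‖q‖ ^ (n + 1) := by
  have hden := one_sub_norm_le_norm_one_sub_pow hq.le n
  have h1q : 0 < 1 - ‖q‖ := sub_pos.mpr hq
  have hM0 : 0 ≤ M := (norm_nonneg _).trans hM
  rw [sigmaFactor_sub_one hq, norm_div, norm_mul, norm_pow, norm_pow, div_mul_eq_mul_div,
    mul_comm M]
  gcongr

lemma hasProdUniformlyOn_sigmaFactor {q : ℂ} (hq : ‖q‖ < 1) {K : Set ℂ} (hK : IsCompact K) :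
    HasProdUniformlyOn (fun n z ↦ sigmaFactor q z n) (fun z ↦ ∏' n, sigmaFactor q z n) K := by
  obtain ⟨M, hM⟩ := hK.exists_bound_of_continuousOn
    (f := fun z ↦ 2 - exp z - exp (-z)) (by fun_prop)
  have hu : Summable fun n ↦ M / (1 - ‖q‖) ^ 2 * ‖q‖ ^ (n + 1) :=
    ((summable_nat_add_iff 1).mpr (summable_geometric_of_lt_one (norm_nonneg q) hq)).mul_left _
  simpa using Summable.hasProdUniformlyOn_nat_one_add (f := fun n z ↦ sigmaFactor q z n - 1) hK hu
    (.of_forall fun n z hz ↦ norm_sigmaFactor_sub_one_le hq (hM z hz) n)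
    fun n ↦ by unfold sigmaFactor; fun_prop

lemma multipliable_sigmaFactor {q : ℂ} (hq : ‖q‖ < 1) (z : ℂ) :
    Multipliable (sigmaFactor q z) :=
  ((hasProdUniformlyOn_sigmaFactor hq isCompact_singleton).hasProd rfl).multipliable

lemma differentiable_tprod_sigmaFactor {q : ℂ} (hq : ‖q‖ < 1) :
    Differentiable ℂ fun z ↦ ∏' n, sigmaFactor q z n := by
  rw [← differentiableOn_univ]
  refine (hasProdLocallyUniformlyOn_of_forall_compact isOpen_univ
    fun K _ hK ↦ hasProdUniformlyOn_sigmaFactor hq hK).differentiableOn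
    (.of_forall fun s ↦ ?_) isOpen_univ
  simpa [Finset.prod_fn] using
    DifferentiableOn.finsetProd fun n _ ↦ by unfold sigmaFactor; fun_prop

theorem wsigma_multipliable_and_holomorphic (τ : ℂ) (hτ : 0 < τ.im) :
    (∀ z : ℂ, Multipliable fun n : ℕ =>
      (1 - nome τ ^ (n + 1) * Complex.exp z) * (1 - nome τ ^ (n + 1) * Complex.exp (-z)) /
        (1 - nome τ ^ (n + 1)) ^ 2) ∧
    (∀ z : ℂ, DifferentiableAt ℂ (wsigma τ) z) := by
  have hq := norm_nome_lt_one hτ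
  refine ⟨multipliable_sigmaFactor hq, ?_⟩
  have hprefactor : Differentiable ℂ fun z ↦ exp (z / 2) - exp (-z / 2) := by fun_prop
  exact (hprefactor.mul (differentiable_tprod_sigmaFactor hq) ·)
end

section
/- The sigma function satisfies σ(z + 2πiτ) = −exp(−(z + πiτ))·σ(z) for all z ∈ ℂ. -/
/-
With `s = exp(πiτ)`, `q = s²` and `x = exp(z/2)`, the sigma function is, up to the constant
`(q; q)_∞²`, the function `(x - x⁻¹) (qx²; q)_∞ (qx⁻²; q)_∞` of `x`. Translating `z` by `2πiτ`
multiplies `x` by `s`, and the functional equation `(a; q)_∞ = (1 - a) (aq; q)_∞` moves one factor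
from one infinite product to the other. What is left are the elementary prefactors
`(xs - (xs)⁻¹)(1 - x⁻²)` and `(x - x⁻¹)(1 - s²x²)`, whose ratio is `-(x²s)⁻¹ = -exp(-(z + πiτ))`.
-/

open Complex
open scoped Real

section qPochhammer

variable {R : Type*} [NormedCommRing R] [NormOneClass R] {q : R}

noncomputable def qPochhammerInf (a q : R) : R := ∏' n : ℕ, (1 - a * q ^ n)

lemma summable_norm_mul_pow (a : R) (hq : ‖q‖ < 1) : Summable fun n : ℕ ↦ ‖a * q ^ n‖ :=
  ((summable_geometric_of_lt_one (norm_nonneg q) hq).mul_left ‖a‖).of_nonneg_of_le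
    (fun _ ↦ norm_nonneg _)
    fun n ↦ (norm_mul_le _ _).trans (mul_le_mul_of_nonneg_left (norm_pow_le q n) (norm_nonneg a))

lemma multipliable_one_sub_mul_pow [CompleteSpace R] (a : R) (hq : ‖q‖ < 1) :
    Multipliable fun n : ℕ ↦ 1 - a * q ^ n := by
  simpa only [sub_eq_add_neg] using
    multipliable_one_add_of_summable (f := fun n ↦ -(a * q ^ n))
      (by simpa only [norm_neg] using summable_norm_mul_pow a hq)

lemma qPochhammerInf_eq_one_sub_mul [CompleteSpace R] (a : R) (hq : ‖q‖ < 1) :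
    qPochhammerInf a q = (1 - a) * qPochhammerInf (a * q) q := by
  have hshift : (fun n : ℕ ↦ 1 - a * q ^ (n + 1)) = fun n ↦ 1 - a * q * q ^ n := by
    funext n; ring
  unfold qPochhammerInf
  rw [tprod_eq_zero_mul' (hshift ▸ multipliable_one_sub_mul_pow (a * q) hq), hshift,
    pow_zero, mul_one]

lemma qPochhammerInf_ne_zero [CompleteSpace R] [NormMulClass R] {a : R} (hq : ‖q‖ < 1)
    (ha : ∀ n : ℕ, a * q ^ n ≠ 1) :
    qPochhammerInf a q ≠ 0 := by
  simpa only [qPochhammerInf, sub_eq_add_neg] using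
    tprod_one_add_ne_zero_of_summable (f := fun n ↦ -(a * q ^ n))
      (fun n ↦ by rw [← sub_eq_add_neg, sub_ne_zero]; exact (ha n).symm)
      (by simpa only [norm_neg] using summable_norm_mul_pow a hq)

end qPochhammer

section qSigma

variable {𝕜 : Type*} [NormedField 𝕜] [CompleteSpace 𝕜]

noncomputable def qSigma (s x : 𝕜) : 𝕜 :=
  (x - x⁻¹) * qPochhammerInf (s ^ 2 * x ^ 2) (s ^ 2) * qPochhammerInf (s ^ 2 * x⁻¹ ^ 2) (s ^ 2)

lemma qSigma_mul_right {s x : 𝕜} (hs : ‖s‖ < 1) (hs₀ : s ≠ 0) (hx : x ≠ 0) :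
    qSigma s (x * s) = -(x ^ 2 * s)⁻¹ * qSigma s x := by
  have hq : ‖s ^ 2‖ < 1 := by
    rw [norm_pow]; exact pow_lt_one₀ (norm_nonneg s) hs two_ne_zero
  have hpos : qPochhammerInf (s ^ 2 * x ^ 2) (s ^ 2) =
      (1 - s ^ 2 * x ^ 2) * qPochhammerInf (s ^ 2 * (x * s) ^ 2) (s ^ 2) := by
    rw [qPochhammerInf_eq_one_sub_mul _ hq]; ring_nf
  have hneg : qPochhammerInf (s ^ 2 * (x * s)⁻¹ ^ 2) (s ^ 2) =
      (1 - x⁻¹ ^ 2) * qPochhammerInf (s ^ 2 * x⁻¹ ^ 2) (s ^ 2) := by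
    rw [show s ^ 2 * (x * s)⁻¹ ^ 2 = x⁻¹ ^ 2 by field_simp, qPochhammerInf_eq_one_sub_mul _ hq,
      mul_comm (x⁻¹ ^ 2)]
  unfold qSigma
  rw [hpos, hneg]
  field_simp
  ring

end qSigma

lemma tprod_one_sub_pow_mul_div_one_sub_pow_sq {𝕜 : Type*} [NormedField 𝕜] [CompleteSpace 𝕜]
    {q : 𝕜} (hq : ‖q‖ < 1) (u v : 𝕜) :
    ∏' n : ℕ, (1 - q ^ (n + 1) * u) * (1 - q ^ (n + 1) * v) / (1 - q ^ (n + 1)) ^ 2 =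
      qPochhammerInf (q * u) q * qPochhammerInf (q * v) q / qPochhammerInf q q ^ 2 := by
  have hpow (w : 𝕜) : (fun n : ℕ ↦ 1 - q ^ (n + 1) * w) = fun n ↦ 1 - q * w * q ^ n := by
    funext n; ring
  have hden : (fun n : ℕ ↦ 1 - q ^ (n + 1)) = fun n ↦ 1 - q * q ^ n := by
    funext n; ring
  have hu := hpow u ▸ multipliable_one_sub_mul_pow (q * u) hq
  have hv := hpow v ▸ multipliable_one_sub_mul_pow (q * v) hq
  have hd := hden ▸ multipliable_one_sub_mul_pow q hq
  have hd₀ : ∏' n : ℕ, (1 - q ^ (n + 1)) ^ 2 ≠ 0 := by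
    rw [hd.tprod_pow, hden]
    refine pow_ne_zero 2 (qPochhammerInf_ne_zero hq fun n h ↦ ?_)
    have : ‖q * q ^ n‖ < 1 := by
      rw [← pow_succ', norm_pow]; exact pow_lt_one₀ (norm_nonneg q) hq n.succ_ne_zero
    simp [h] at this
  rw [(hu.mul hv).tprod_div₀ (hd.pow 2) hd₀, hu.tprod_mul hv, hd.tprod_pow, hpow, hpow, hden]
  rfl

lemma norm_exp_pi_I_mul_lt_one {τ : ℂ} (hτ : 0 < τ.im) : ‖exp (π * I * τ)‖ < 1 := by
  have hre : (π * I * τ).re = -(π * τ.im) := by simp [mul_re, mul_im]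
  rw [norm_exp, Real.exp_lt_one_iff, hre, neg_lt_zero]
  exact mul_pos Real.pi_pos hτ

lemma nome_eq_exp_pi_I_mul_sq (τ : ℂ) : nome τ = exp (π * I * τ) ^ 2 := by
  rw [nome, ← exp_nat_mul]; ring_nf

lemma wsigma_eq_qSigma {τ : ℂ} (hτ : 0 < τ.im) (z : ℂ) :
    wsigma τ z = qSigma (exp (π * I * τ)) (exp (z / 2)) / qPochhammerInf (nome τ) (nome τ) ^ 2 := by
  have hq : ‖nome τ‖ < 1 := by
    rw [nome_eq_exp_pi_I_mul_sq, norm_pow]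
    exact pow_lt_one₀ (norm_nonneg _) (norm_exp_pi_I_mul_lt_one hτ) two_ne_zero
  have hz : exp z = exp (z / 2) ^ 2 := by rw [← exp_nat_mul]; ring_nf
  have hmz : exp (-z) = (exp (z / 2))⁻¹ ^ 2 := by rw [← exp_neg, ← exp_nat_mul]; ring_nf
  have hmz2 : exp (-z / 2) = (exp (z / 2))⁻¹ := by rw [← exp_neg, neg_div]
  rw [wsigma, tprod_one_sub_pow_mul_div_one_sub_pow_sq hq, qSigma, ← nome_eq_exp_pi_I_mul_sq,
    hz, hmz, hmz2]
  ring

theorem wsigma_add_two_pi_I_tau (τ : ℂ) (hτ : 0 < τ.im) :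
    ∀ z : ℂ, wsigma τ (z + 2 * Real.pi * Complex.I * τ) =
      -Complex.exp (-(z + Real.pi * Complex.I * τ)) * wsigma τ z := by
  intro z
  have hshift : exp ((z + 2 * π * I * τ) / 2) = exp (z / 2) * exp (π * I * τ) := by
    rw [← exp_add]; ring_nf
  have hfactor : exp (-(z + π * I * τ)) = (exp (z / 2) ^ 2 * exp (π * I * τ))⁻¹ := by
    rw [← exp_nat_mul, ← exp_add, ← exp_neg]; ring_nf
  rw [wsigma_eq_qSigma hτ, wsigma_eq_qSigma hτ, hshift,
    qSigma_mul_right (norm_exp_pi_I_mul_lt_one hτ) (exp_ne_zero _) (exp_ne_zero _), hfactor]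
  ring
end

section
/- Ellipticity of the transition function e(0,b): let Λ, θ, γ, c be as in the context. Let I and I' be finite index sets, with integers m : I → ℤ, m' : I' → ℤ and complex numbers x : I → ℂ, x' : I' → ℂ, satisfying (i) Σ_{i∈I} m_i ≡ Σ_{i∈I'} m'_i (mod 2), (ii) Σ_{i∈I} m_i² = Σ_{i∈I'} (m'_i)², and (iii) Σ_{i∈I} m_i·x_i = Σ_{i∈I'} m'_i·x'_i. Then for every λ ∈ Λ and every z ∈ ℂ, ∏_{i∈I'} θ(x'_i + m'_i·(z + λ)) · ∏_{i∈I} θ(x_i + m_i·z) = ∏_{i∈I'} θ(x'_i + m'_i·z) · ∏_{i∈I} θ(x_i + m_i·(z + λ)). -/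
/-!
Iterating the transformation law gives `θ (w + n l) = c^n exp (n γ (w + n l / 2)) θ w` for all
`n : ℤ`. Hence replacing `z` by `z + l` multiplies `∏ θ (x i + m i z)` by
`c ^ (∑ m i) * exp (γ (∑ m i x i + (∑ m i ^ 2) (z + l / 2)))`, a factor that depends on the data
only through the parity of `∑ m i` (as `c = ±1`), `∑ m i ^ 2` and `∑ m i x i`. Conditions (i)–(iii)
say exactly that the factors for `(m, x)` and `(m', x')` coincide.
-/

open Complex Finset

theorem prod_zpow_eq_zpow_sum {ι G₀ : Type*} [CommGroupWithZero G₀] (s : Finset ι) (f : ι → ℤ)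
    {a : G₀} (ha : a ≠ 0) : ∏ i ∈ s, a ^ f i = a ^ ∑ i ∈ s, f i := by
  classical
  induction s using Finset.induction_on with
  | empty => simp
  | insert _ _ h ih => rw [prod_insert h, sum_insert h, zpow_add₀ ha, ih]

theorem zpow_eq_zpow_of_sq_eq_one {G₀ : Type*} [GroupWithZero G₀] {a : G₀} (ha : a ^ 2 = 1)
    {m n : ℤ} (h : m ≡ n [ZMOD 2]) : a ^ m = a ^ n := by
  obtain ⟨k, hk⟩ := h.dvd
  have ha₀ : a ≠ 0 := by rintro rfl; simp at ha
  rw [show n = m + 2 * k by omega, zpow_add₀ ha₀, zpow_mul, zpow_two, ← pow_two, ha, one_zpow,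
    mul_one]

section QuasiPeriodic

variable {θ : ℂ → ℂ} {a g l : ℂ}

theorem quasiPeriodic_add_nat_mul
    (h : ∀ w, θ (w + l) = a * exp (g * (w + l / 2)) * θ w) (n : ℕ) (w : ℂ) :
    θ (w + n * l) = a ^ n * exp (n * g * (w + n * l / 2)) * θ w := by
  induction n with
  | zero => simp
  | succ n ih =>
    rw [Nat.cast_succ, show w + (n + 1) * l = w + n * l + l by ring, h, ih,
      show a * exp (g * (w + n * l + l / 2)) * (a ^ n * exp (n * g * (w + n * l / 2)) * θ w)
        = a ^ (n + 1) * exp (g * (w + n * l + l / 2) + n * g * (w + n * l / 2)) * θ w by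
        rw [exp_add]; ring]
    congr 3
    ring

theorem quasiPeriodic_add_int_mul (ha : a ≠ 0)
    (h : ∀ w, θ (w + l) = a * exp (g * (w + l / 2)) * θ w) (n : ℤ) (w : ℂ) :
    θ (w + n * l) = a ^ n * exp (n * g * (w + n * l / 2)) * θ w := by
  obtain ⟨n, rfl | rfl⟩ := n.eq_nat_or_neg
  · exact_mod_cast quasiPeriodic_add_nat_mul h n w
  · have key := quasiPeriodic_add_nat_mul h n (w - n * l)
    rw [sub_add_cancel] at key
    have hexp : exp (-n * g * (w + -n * l / 2)) = (exp (n * g * (w - n * l + n * l / 2)))⁻¹ := by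
      rw [← exp_neg]; ring_nf
    rw [Int.cast_neg, Int.cast_natCast, zpow_neg, zpow_natCast, hexp, key, neg_mul,
      ← sub_eq_add_neg]
    field_simp

theorem prod_quasiPeriodic_add_mul {ι : Type*} [Fintype ι] (ha : a ≠ 0)
    (h : ∀ w, θ (w + l) = a * exp (g * (w + l / 2)) * θ w) (m : ι → ℤ) (x : ι → ℂ) (z : ℂ) :
    ∏ i, θ (x i + m i * (z + l)) =
      a ^ (∑ i, m i) * exp (g * (∑ i, (m i : ℂ) * x i + (∑ i, (m i : ℂ) ^ 2) * (z + l / 2))) *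
        ∏ i, θ (x i + m i * z) := by
  simp_rw [show ∀ i, x i + m i * (z + l) = x i + m i * z + m i * l from fun i => by ring,
    quasiPeriodic_add_int_mul ha h, prod_mul_distrib, prod_zpow_eq_zpow_sum _ _ ha, ← exp_sum]
  congr 3
  rw [mul_add, sum_mul, mul_sum, mul_sum, ← sum_add_distrib]
  exact sum_congr rfl fun i _ => by ring

end QuasiPeriodic

theorem transition_function_elliptic_general
    (Λ : AddSubgroup ℂ)
    (θ γ c : ℂ → ℂ)
    (hc : ∀ l ∈ Λ, c l = 1 ∨ c l = -1)
    (hfe : ∀ z : ℂ, ∀ l ∈ Λ, θ (z + l) = c l * Complex.exp (γ l * (z + l / 2)) * θ z)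
    (I I' : Type*) [Fintype I] [Fintype I']
    (m : I → ℤ) (m' : I' → ℤ) (x : I → ℂ) (x' : I' → ℂ)
    (hmod : (∑ i : I, m i) ≡ (∑ i : I', m' i) [ZMOD 2])
    (hsq : ∑ i : I, (m i) ^ 2 = ∑ i : I', (m' i) ^ 2)
    (hlin : ∑ i : I, (m i : ℂ) * x i = ∑ i : I', (m' i : ℂ) * x' i) :
    ∀ l ∈ Λ, ∀ z : ℂ,
      (∏ i : I', θ (x' i + m' i * (z + l))) * ∏ i : I, θ (x i + m i * z) =
        (∏ i : I', θ (x' i + m' i * z)) * ∏ i : I, θ (x i + m i * (z + l)) := by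
  intro l hl z
  have hc_sq : c l ^ 2 = 1 := by rcases hc l hl with h | h <;> simp [h]
  have hc₀ : c l ≠ 0 := by rintro h; simp [h] at hc_sq
  have hsq' : ∑ i : I, (m i : ℂ) ^ 2 = ∑ i : I', (m' i : ℂ) ^ 2 := by exact_mod_cast hsq
  rw [prod_quasiPeriodic_add_mul hc₀ (hfe · l hl), prod_quasiPeriodic_add_mul hc₀ (hfe · l hl),
    zpow_eq_zpow_of_sq_eq_one hc_sq hmod, hlin, hsq']
  ring

theorem transition_function_elliptic
    (ω₁ ω₂ : ℂ) (hindep : LinearIndependent ℝ ![ω₁, ω₂])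
    (Λ : AddSubgroup ℂ) (hΛ : ∀ z : ℂ, z ∈ Λ ↔ ∃ a b : ℤ, z = a * ω₁ + b * ω₂)
    (θ γ c : ℂ → ℂ)
    (U : Set ℂ) (hUopen : IsOpen U) (hUne : U.Nonempty)
    (hθU : ∀ z ∈ U, θ z ≠ 0)
    (hc : ∀ l ∈ Λ, c l = 1 ∨ c l = -1)
    (hfe : ∀ z : ℂ, ∀ l ∈ Λ, θ (z + l) = c l * Complex.exp (γ l * (z + l / 2)) * θ z)
    (I I' : Type*) [Fintype I] [Fintype I']
    (m : I → ℤ) (m' : I' → ℤ) (x : I → ℂ) (x' : I' → ℂ)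
    (hmod : (∑ i : I, m i) ≡ (∑ i : I', m' i) [ZMOD 2])
    (hsq : ∑ i : I, (m i) ^ 2 = ∑ i : I', (m' i) ^ 2)
    (hlin : ∑ i : I, (m i : ℂ) * x i = ∑ i : I', (m' i : ℂ) * x' i) :
    ∀ l ∈ Λ, ∀ z : ℂ,
      (∏ i : I', θ (x' i + m' i * (z + l))) * ∏ i : I, θ (x i + m i * z) =
        (∏ i : I', θ (x' i + m' i * z)) * ∏ i : I, θ (x i + m i * (z + l)) :=
  transition_function_elliptic_general Λ θ γ c hc hfe I I' m m' x x' hmod hsq hlin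
end
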